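/- arXiv:math/0605462 — 4 statements merged into one kernel-verified Lean document; each statement's English description precedes it below -/
import Mathlib

section
/- Let X_m be a chi-squared random variable with m degrees of freedom and let d > 0. Then P(X_m ≥ (1+d)m) ≤ (1/2)·exp(−(m/2)·(d − log(1+d))). -/
/-!
Passing to the law of `(Zᵢ)`, the standard Gaussian on `ℝᵐ`, polar coordinates write the tail as
`∫_{√((1+d)m)}^∞ g / ∫_0^∞ g` with `g r = r^(m-1) e^(-r²/2)`. The substitution `r = √(1+d) u`
brings the numerator to `(1+d)^(m/2) ∫_{√m}^∞ u^(m-1) e^(-(1+d)u²/2) du`, and on `u² ≥ m` the extra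
factor `e^(-d u²/2)` is at most `e^(-dm/2)`; this is the Chernoff bound. The factor `1/2` is the
statement that the median of `χ²_m` is at most `m`: the inversion `v ↦ m / v` maps `(0, √m)` onto
`(√m, ∞)`, and since `log x ≤ (x - x⁻¹) / 2` for `x ≥ 1` the pull-back of `g` under it is
pointwise at most `g`, so `g` has no more mass above `√m` than below.
-/

open MeasureTheory ProbabilityTheory Real Set

lemma Real.log_le_half_sub_inv {x : ℝ} (hx : 1 ≤ x) : log x ≤ (x - x⁻¹) / 2 := by
  rw [← sinh_log (by linarith)]
  exact self_le_sinh_iff.2 (log_nonneg hx)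

/-- The density of `‖Z‖` for a standard Gaussian vector `Z` in `ℝⁿ`, up to normalisation. -/
noncomputable def chiWeight (n : ℕ) (r : ℝ) : ℝ := r ^ (n - 1) * exp (-r ^ 2 / 2)

lemma chiWeight_nonneg (n : ℕ) {r : ℝ} (hr : 0 ≤ r) : 0 ≤ chiWeight n r := by
  unfold chiWeight; positivity

lemma integrable_chiWeight (n : ℕ) : Integrable (chiWeight n) := by
  have h := integrable_rpow_mul_exp_neg_mul_sq (b := 1 / 2) (by norm_num)
    (s := ((n - 1 : ℕ) : ℝ)) (neg_one_lt_zero.trans_le (Nat.cast_nonneg _))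
  refine h.congr (ae_of_all _ fun r => ?_)
  simp only [chiWeight, rpow_natCast]
  ring_nf

lemma chiWeight_div_le {n : ℕ} {v : ℝ} (hv : 0 < v) (hvn : v ^ 2 ≤ n) :
    n / v ^ 2 * chiWeight n (n / v) ≤ chiWeight n v := by
  have hn : 1 ≤ n := by exact_mod_cast (pow_pos hv 2).trans_le hvn
  set x : ℝ := n / v ^ 2 with hx
  have hx1 : 1 ≤ x := (one_le_div (by positivity)).2 hvn
  have hnx : (n : ℝ) = x * v ^ 2 := by rw [hx]; field_simp
  have hdiv : (n : ℝ) / v = x * v := by rw [hnx]; field_simp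
  have key : x ^ n * exp (-(x * v) ^ 2 / 2) ≤ exp (-v ^ 2 / 2) := by
    rw [← exp_log (pow_pos (by positivity) n), ← exp_add, exp_le_exp, log_pow]
    have hlog := mul_le_mul_of_nonneg_left (log_le_half_sub_inv hx1) (Nat.cast_nonneg n)
    calc (n : ℝ) * log x + -(x * v) ^ 2 / 2 ≤ n * ((x - x⁻¹) / 2) + -(x * v) ^ 2 / 2 := by
          linarith
      _ = -v ^ 2 / 2 := by rw [hnx]; field_simp; ring
  have hxn : x ^ n = x * x ^ (n - 1) := by rw [← pow_succ', Nat.sub_add_cancel hn]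
  calc x * chiWeight n (n / v) = v ^ (n - 1) * (x ^ n * exp (-(x * v) ^ 2 / 2)) := by
        rw [chiWeight, hdiv, hxn, mul_pow]; ring
    _ ≤ v ^ (n - 1) * exp (-v ^ 2 / 2) := by gcongr
    _ = chiWeight n v := rfl

lemma integral_Ioi_sqrt_chiWeight_le_integral_Ioo {n : ℕ} (hn : 1 ≤ n) :
    ∫ r in Ioi √n, chiWeight n r ≤ ∫ r in Ioo 0 √n, chiWeight n r := by
  have hn0 : (0 : ℝ) < n := by exact_mod_cast hn
  have hsq : √n * √n = n := mul_self_sqrt hn0.le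
  have hsqrt0 : 0 < √(n : ℝ) := sqrt_pos.2 hn0
  have himage : (fun v : ℝ => n / v) '' Ioo 0 √n = Ioi √n := by
    ext u
    simp only [mem_image, mem_Ioo, mem_Ioi]
    constructor
    · rintro ⟨v, ⟨hv0, hvn⟩, rfl⟩
      rw [lt_div_iff₀ hv0]
      nlinarith
    · intro hu
      have hu0 : 0 < u := hsqrt0.trans hu
      refine ⟨n / u, ⟨by positivity, ?_⟩, by field_simp⟩
      rw [div_lt_iff₀ hu0]
      nlinarith
  have hderiv : ∀ v ∈ Ioo (0 : ℝ) √n,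
      HasDerivWithinAt (fun v : ℝ => n / v) (-(n / v ^ 2)) (Ioo 0 √n) v := by
    intro v hv
    have := (hasDerivAt_inv hv.1.ne').const_mul (n : ℝ)
    simp only [← div_eq_mul_inv, mul_neg] at this
    exact this.hasDerivWithinAt
  have hinj : InjOn (fun v : ℝ => n / v) (Ioo 0 √n) := fun v hv w hw h => by
    simpa [div_eq_div_iff, hn0.ne', hv.1.ne', hw.1.ne'] using h.symm
  have hcov := integral_image_eq_integral_abs_deriv_smul measurableSet_Ioo hderiv hinj
    (chiWeight n)
  have hint := (integrableOn_image_iff_integrableOn_abs_deriv_smul measurableSet_Ioo hderiv hinj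
    (chiWeight n)).1 (integrable_chiWeight n).integrableOn
  rw [← himage, hcov]
  refine setIntegral_mono_on hint (integrable_chiWeight n).integrableOn measurableSet_Ioo
    fun v hv => ?_
  rw [abs_neg, abs_of_nonneg (by positivity), smul_eq_mul]
  refine chiWeight_div_le hv.1 ?_
  nlinarith [hv.1, hv.2]

lemma two_mul_integral_Ioi_sqrt_chiWeight_le {n : ℕ} (hn : 1 ≤ n) :
    2 * ∫ r in Ioi √n, chiWeight n r ≤ ∫ r in Ioi 0, chiWeight n r := by
  rw [← Ioc_union_Ioi_eq_Ioi (sqrt_nonneg n), setIntegral_union (Ioc_disjoint_Ioi le_rfl)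
    measurableSet_Ioi (integrable_chiWeight n).integrableOn (integrable_chiWeight n).integrableOn,
    integral_Ioc_eq_integral_Ioo]
  linarith [integral_Ioi_sqrt_chiWeight_le_integral_Ioo hn]

lemma integral_Ioi_sqrt_one_add_mul_chiWeight_le {n : ℕ} (hn : 1 ≤ n) {d : ℝ} (hd : 0 ≤ d) :
    ∫ r in Ioi √((1 + d) * n), chiWeight n r
      ≤ exp (-(n / 2) * (d - log (1 + d))) * ∫ r in Ioi √n, chiWeight n r := by
  have hd1 : 0 < 1 + d := by linarith
  set s := √(1 + d) with hs
  have hs0 : 0 < s := sqrt_pos.2 hd1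
  have hs2 : s ^ 2 = 1 + d := sq_sqrt hd1.le
  have hpoint : ∀ u ∈ Ioi √(n : ℝ),
      chiWeight n (s * u) ≤ s ^ (n - 1) * exp (-(d * n / 2)) * chiWeight n u := by
    intro u hu
    have hu0 : 0 < u := (sqrt_nonneg _).trans_lt hu
    have hnu : (n : ℝ) < u ^ 2 := (sqrt_lt' hu0).1 hu
    have hexp : exp (-((1 + d) * u ^ 2) / 2) ≤ exp (-(d * n / 2)) * exp (-u ^ 2 / 2) := by
      rw [← exp_add, exp_le_exp]
      nlinarith
    calc chiWeight n (s * u) = s ^ (n - 1) * u ^ (n - 1) * exp (-((1 + d) * u ^ 2) / 2) := by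
          rw [chiWeight, mul_pow, mul_pow, hs2]
      _ ≤ s ^ (n - 1) * u ^ (n - 1) * (exp (-(d * n / 2)) * exp (-u ^ 2 / 2)) := by gcongr
      _ = s ^ (n - 1) * exp (-(d * n / 2)) * chiWeight n u := by rw [chiWeight]; ring
  have hint : IntegrableOn (fun u => chiWeight n (s * u)) (Ioi √n) :=
    ((integrable_chiWeight n).comp_mul_left' hs0.ne').integrableOn
  calc ∫ r in Ioi √((1 + d) * n), chiWeight n r = s * ∫ u in Ioi √n, chiWeight n (s * u) := by
        rw [sqrt_mul hd1.le, ← integral_comp_mul_left_Ioi' _ _ hs0, smul_eq_mul]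
    _ ≤ s * ∫ u in Ioi √n, s ^ (n - 1) * exp (-(d * n / 2)) * chiWeight n u := by
        refine mul_le_mul_of_nonneg_left ?_ hs0.le
        exact setIntegral_mono_on hint ((integrable_chiWeight n).integrableOn.const_mul _)
          measurableSet_Ioi hpoint
    _ = exp (-(n / 2) * (d - log (1 + d))) * ∫ r in Ioi √n, chiWeight n r := by
        rw [integral_const_mul, ← mul_assoc, ← mul_assoc, ← pow_succ', Nat.sub_add_cancel hn]
        congr 1
        have hsn : s ^ n = exp (n * (log (1 + d) / 2)) := by
          rw [exp_nat_mul, ← log_sqrt hd1.le, ← hs, exp_log hs0]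
        rw [hsn, ← exp_add]
        ring_nf

lemma pi_gaussianReal_eq_withDensity (ι : Type*) [Fintype ι] :
    Measure.pi (fun _ : ι => gaussianReal 0 1)
      = volume.withDensity (fun x : ι → ℝ => ENNReal.ofReal (∏ i, gaussianPDFReal 0 1 (x i))) := by
  refine Measure.pi_eq fun s hs => ?_
  have hint : Integrable (fun x : ι → ℝ => ∏ i, gaussianPDFReal 0 1 (x i))
      (Measure.pi fun i => volume.restrict (s i)) :=
    Integrable.fintype_prod fun _ => (integrable_gaussianPDFReal 0 1).restrict
  rw [withDensity_apply _ (.univ_pi hs), volume_pi, Measure.restrict_pi_pi,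
    ← ofReal_integral_eq_lintegral_ofReal hint
      (ae_of_all _ fun x => Finset.prod_nonneg fun i _ => gaussianPDFReal_nonneg 0 1 _),
    integral_fintype_prod_eq_prod,
    ENNReal.ofReal_prod_of_nonneg fun i _ => setIntegral_nonneg (hs i) fun x _ =>
      gaussianPDFReal_nonneg 0 1 x]
  exact Finset.prod_congr rfl fun i _ => (gaussianReal_apply_eq_integral 0 one_ne_zero _).symm

lemma prod_gaussianPDFReal {ι : Type*} [Fintype ι] (x : ι → ℝ) :
    ∏ i, gaussianPDFReal 0 1 (x i)
      = (√(2 * π))⁻¹ ^ Fintype.card ι * exp (-(∑ i, x i ^ 2) / 2) := by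
  simp only [gaussianPDFReal, NNReal.coe_one, mul_one, sub_zero]
  rw [Finset.prod_mul_distrib, Finset.prod_const, ← exp_sum, Finset.card_univ]
  congr 2
  rw [← Finset.sum_neg_distrib, Finset.sum_div]

lemma integral_stdGaussian_euclideanSpace {ι : Type*} [Fintype ι]
    (F : EuclideanSpace ℝ ι → ℝ) :
    ∫ y, F y ∂stdGaussian (EuclideanSpace ℝ ι)
      = ∫ y, (√(2 * π))⁻¹ ^ Fintype.card ι * exp (-‖y‖ ^ 2 / 2) * F y := by
  have hdens : Measurable fun x : ι → ℝ => ENNReal.ofReal (∏ i, gaussianPDFReal 0 1 (x i)) :=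
    (Finset.measurable_prod _ fun i _ =>
      (measurable_gaussianPDFReal 0 1).comp (measurable_pi_apply i)).ennreal_ofReal
  rw [← map_pi_eq_stdGaussian, ← (PiLp.volume_preserving_toLp ι).integral_comp
    (MeasurableEquiv.toLp 2 (ι → ℝ)).measurableEmbedding]
  refine (integral_map_equiv (MeasurableEquiv.toLp 2 (ι → ℝ)) F).trans ?_
  rw [pi_gaussianReal_eq_withDensity, integral_withDensity_eq_integral_toReal_smul hdens
    (ae_of_all _ fun _ => ENNReal.ofReal_lt_top)]
  congr 1 with x
  rw [smul_eq_mul, ENNReal.toReal_ofReal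
    (Finset.prod_nonneg fun i _ => gaussianPDFReal_nonneg 0 1 _), prod_gaussianPDFReal,
    EuclideanSpace.real_norm_sq_eq]
  simp

lemma integral_fun_norm_stdGaussian {ι : Type*} [Fintype ι] [Nonempty ι] (F : ℝ → ℝ) :
    ∫ y, F ‖y‖ ∂stdGaussian (EuclideanSpace ℝ ι)
      = (∫ r in Ioi 0, F r * chiWeight (Fintype.card ι) r)
          / ∫ r in Ioi 0, chiWeight (Fintype.card ι) r := by
  set n := Fintype.card ι with hn
  have hradial : ∀ G : ℝ → ℝ, ∫ y, G ‖y‖ ∂stdGaussian (EuclideanSpace ℝ ι)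
      = n * (volume : Measure (EuclideanSpace ℝ ι)).real (Metric.ball 0 1) * (√(2 * π))⁻¹ ^ n
        * ∫ r in Ioi 0, G r * chiWeight n r := by
    intro G
    rw [integral_stdGaussian_euclideanSpace,
      integral_fun_norm_addHaar volume fun r => (√(2 * π))⁻¹ ^ n * exp (-r ^ 2 / 2) * G r,
      finrank_euclideanSpace, ← hn, nsmul_eq_mul, smul_eq_mul, ← integral_const_mul,
      ← integral_const_mul, ← integral_const_mul]
    congr 1 with r
    rw [chiWeight, smul_eq_mul]
    ring
  set K := n * (volume : Measure (EuclideanSpace ℝ ι)).real (Metric.ball 0 1) * (√(2 * π))⁻¹ ^ n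
  have hone : K * ∫ r in Ioi 0, chiWeight n r = 1 := by
    simpa using (hradial fun _ => 1).symm
  rw [hradial, eq_div_iff (right_ne_zero_of_mul_eq_one hone)]
  linear_combination (∫ r in Ioi 0, F r * chiWeight n r) * hone

lemma measureReal_stdGaussian_setOf_le_norm {ι : Type*} [Fintype ι] [Nonempty ι] {ρ : ℝ}
    (hρ : 0 < ρ) :
    (stdGaussian (EuclideanSpace ℝ ι)).real {y | ρ ≤ ‖y‖}
      = (∫ r in Ioi ρ, chiWeight (Fintype.card ι) r)
          / ∫ r in Ioi 0, chiWeight (Fintype.card ι) r := by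
  have hind : {y : EuclideanSpace ℝ ι | ρ ≤ ‖y‖}.indicator (1 : EuclideanSpace ℝ ι → ℝ)
      = fun y => (Ici ρ).indicator 1 ‖y‖ := by
    ext y; simp [indicator_apply]
  rw [← integral_indicator_one (measurableSet_le measurable_const measurable_norm), hind,
    integral_fun_norm_stdGaussian]
  simp_rw [← indicator_mul_left, Pi.one_apply, one_mul]
  rw [setIntegral_indicator measurableSet_Ici, inter_eq_right.2 (Ici_subset_Ioi.2 hρ),
    integral_Ici_eq_integral_Ioi]

lemma measure_setOf_le_sum_sq_eq_stdGaussian {Ω : Type*} [MeasurableSpace Ω] {μ : Measure Ω}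
    [IsProbabilityMeasure μ] {ι : Type*} [Fintype ι] {Z : ι → Ω → ℝ}
    (hmeas : ∀ i, Measurable (Z i)) (hindep : iIndepFun Z μ)
    (hgauss : ∀ i, μ.map (Z i) = gaussianReal 0 1) (c : ℝ) :
    μ {ω | c ≤ ∑ i, Z i ω ^ 2} = stdGaussian (EuclideanSpace ℝ ι) {y | c ≤ ‖y‖ ^ 2} := by
  have hlaw : μ.map (fun ω i => Z i ω) = Measure.pi fun _ => gaussianReal 0 1 := by
    rw [(iIndepFun_iff_map_fun_eq_pi_map fun i => (hmeas i).aemeasurable).1 hindep]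
    simp_rw [hgauss]
  rw [← map_pi_eq_stdGaussian, ← hlaw, Measure.map_map (by fun_prop) (by fun_prop),
    Measure.map_apply (by fun_prop) (measurableSet_le measurable_const (by fun_prop))]
  congr 1 with ω
  simp [EuclideanSpace.real_norm_sq_eq]

/-- Chi-squared upper tail bound: if `X_m = Z_1^2 + ... + Z_m^2` with `Z_i` i.i.d. standard
normal, then for `d > 0`,
`P(X_m ≥ (1+d) m) ≤ (1/2) exp(-(m/2)(d - log(1+d)))`. -/
theorem chi_squared_upper_tail
    {Ω : Type*} [MeasurableSpace Ω] (μ : Measure Ω) [IsProbabilityMeasure μ]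
    (m : ℕ) (hm : 1 ≤ m) (Z : Fin m → Ω → ℝ)
    (hmeas : ∀ i, Measurable (Z i))
    (hindep : iIndepFun Z μ)
    (hgauss : ∀ i, Measure.map (Z i) μ = gaussianReal 0 1)
    (d : ℝ) (hd : 0 < d) :
    (μ {ω | (1 + d) * m ≤ ∑ i, (Z i ω) ^ 2}).toReal ≤
      (1 / 2) * Real.exp (-(m / 2 : ℝ) * (d - Real.log (1 + d))) := by
  have : Nonempty (Fin m) := ⟨⟨0, hm⟩⟩
  have hρ : 0 < √((1 + d) * m) := sqrt_pos.2 (by positivity)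
  have hevent : {y : EuclideanSpace ℝ (Fin m) | (1 + d) * m ≤ ‖y‖ ^ 2}
      = {y | √((1 + d) * m) ≤ ‖y‖} := by
    ext y; exact (sqrt_le_iff.trans (and_iff_right (norm_nonneg y))).symm
  have hW : 0 ≤ ∫ r in Ioi 0, chiWeight m r :=
    setIntegral_nonneg measurableSet_Ioi fun r hr => chiWeight_nonneg m (le_of_lt hr)
  rw [measure_setOf_le_sum_sq_eq_stdGaussian hmeas hindep hgauss, hevent, ← measureReal_def,
    measureReal_stdGaussian_setOf_le_norm hρ, Fintype.card_fin]
  calc (∫ r in Ioi √((1 + d) * m), chiWeight m r) / ∫ r in Ioi 0, chiWeight m r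
      ≤ exp (-(m / 2) * (d - log (1 + d))) * (∫ r in Ioi √m, chiWeight m r)
          / ∫ r in Ioi 0, chiWeight m r :=
        div_le_div_of_nonneg_right (integral_Ioi_sqrt_one_add_mul_chiWeight_le hm hd.le) hW
    _ ≤ exp (-(m / 2) * (d - log (1 + d))) * (1 / 2) := by
        rw [mul_div_assoc]
        refine mul_le_mul_of_nonneg_left (div_le_of_le_mul₀ hW (by norm_num) ?_) (exp_pos _).le
        linarith [two_mul_integral_Ioi_sqrt_chiWeight_le hm]
    _ = _ := by ring
end

section
/- Let P_0 = N(0, n^{-1} I_N) and let P_k be the uniform mixture of N(θ, n^{-1} I_N) over all θ ∈ C(a,k), where C(a,k) is the set of N-vectors whose first k coordinates are ±a and remaining coordinates are 0. Then the chi-squared affinity satisfies ∫ (dP_k)²/dP_0 ≤ exp(k a⁴ n²). -/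
/-!
Expanding the square, each cross term factors as `φ_θ φ_θ' / φ_0 = exp (n ⟪θ, θ'⟫) φ_{θ + θ'}`,
so `∫ p_k² / p_0 = 4⁻ᵏ ∑_{s, s'} exp (n ⟪θ_s, θ_s'⟫)`. The inner product of two cube vertices
splits over the `k` coordinates, so the double sum over the cube factors as `(4 cosh (n a²))ᵏ`.
Hence the integral equals `cosh (n a²)ᵏ ≤ exp (k n² a⁴ / 2)`.
-/

open MeasureTheory Real Finset

theorem Fin.sum_univ_dite_lt {M : Type*} [AddCommMonoid M] {k N : ℕ} (hkN : k ≤ N)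
    (f : Fin k → M) :
    ∑ i : Fin N, (if h : (i : ℕ) < k then f ⟨i, h⟩ else 0) = ∑ j, f j := by
  set g : ℕ → M := fun m => if h : m < k then f ⟨m, h⟩ else 0
  calc ∑ i : Fin N, g i = ∑ m ∈ range N, g m := Fin.sum_univ_eq_sum_range g N
    _ = ∑ m ∈ range k, g m :=
      (sum_subset (range_subset_range.2 hkN) fun m _ hm => dif_neg (by simpa using hm)).symm
    _ = ∑ j : Fin k, g j := (Fin.sum_univ_eq_sum_range g k).symm
    _ = ∑ j, f j := sum_congr rfl fun j _ => dif_pos j.2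

theorem sum_sum_prod_eq_pow {ι α R : Type*} [Fintype ι] [DecidableEq ι] [Fintype α]
    [CommSemiring R] (f : α → α → R) :
    ∑ s : ι → α, ∑ s' : ι → α, ∏ j, f (s j) (s' j) = (∑ b, ∑ b', f b b') ^ Fintype.card ι :=
  calc ∑ s : ι → α, ∑ s' : ι → α, ∏ j, f (s j) (s' j) = ∑ s : ι → α, ∏ j, ∑ b', f (s j) b' :=
        sum_congr rfl fun s _ => (Fintype.prod_sum fun j b' => f (s j) b').symm
    _ = ∏ _j : ι, ∑ b, ∑ b', f b b' := (Fintype.prod_sum fun _ b => ∑ b', f b b').symm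
    _ = _ := by rw [prod_const, card_univ]

theorem dotProduct_dite_lt {R : Type*} [NonUnitalNonAssocSemiring R] {k N : ℕ} (hkN : k ≤ N)
    (u v : Fin k → R) :
    (fun i : Fin N => if h : (i : ℕ) < k then u ⟨i, h⟩ else 0) ⬝ᵥ
        (fun i : Fin N => if h : (i : ℕ) < k then v ⟨i, h⟩ else 0) = u ⬝ᵥ v := by
  rw [dotProduct, dotProduct, ← Fin.sum_univ_dite_lt hkN]
  refine sum_congr rfl fun i _ => ?_
  split_ifs <;> simp

theorem sum_bool_sum_bool_exp_mul_sign (t a : ℝ) :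
    ∑ b : Bool, ∑ b' : Bool, exp (t * ((if b then a else -a) * (if b' then a else -a))) =
      4 * cosh (t * a ^ 2) := by
  simp only [Fintype.sum_bool, if_true, Bool.false_eq_true, if_false, cosh_eq]
  ring_nf

noncomputable def gaussDensity (n μ x : ℝ) : ℝ :=
  √(n / (2 * π)) * exp (-(n * (x - μ) ^ 2) / 2)

noncomputable def isoGaussDensity {ι : Type*} [Fintype ι] (n : ℝ) (θ x : ι → ℝ) : ℝ :=
  ∏ i, gaussDensity n (θ i) (x i)

section Gaussian

variable {n : ℝ}

theorem gaussDensity_eq_gaussianPDFReal (hn : 0 < n) (μ : ℝ) :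
    gaussDensity n μ = ProbabilityTheory.gaussianPDFReal μ n⁻¹.toNNReal := by
  funext x
  rw [ProbabilityTheory.gaussianPDFReal, Real.coe_toNNReal _ (by positivity), gaussDensity,
    ← sqrt_inv]
  congr 2 <;> field_simp

theorem gaussDensity_pos (hn : 0 < n) (μ x : ℝ) : 0 < gaussDensity n μ x := by
  have := pi_pos
  unfold gaussDensity
  positivity

theorem integrable_gaussDensity (hn : 0 < n) (μ : ℝ) : Integrable (gaussDensity n μ) := by
  rw [gaussDensity_eq_gaussianPDFReal hn]
  exact ProbabilityTheory.integrable_gaussianPDFReal _ _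

theorem integral_gaussDensity (hn : 0 < n) (μ : ℝ) : ∫ x, gaussDensity n μ x = 1 := by
  rw [gaussDensity_eq_gaussianPDFReal hn]
  exact ProbabilityTheory.integral_gaussianPDFReal_eq_one μ (by simpa using hn)

theorem gaussDensity_mul_gaussDensity (n θ θ' x : ℝ) :
    gaussDensity n θ x * gaussDensity n θ' x =
      exp (n * (θ * θ')) * gaussDensity n (θ + θ') x * gaussDensity n 0 x := by
  have hexp : exp (-(n * (x - θ) ^ 2) / 2) * exp (-(n * (x - θ') ^ 2) / 2) =
      exp (n * (θ * θ')) * exp (-(n * (x - (θ + θ')) ^ 2) / 2) * exp (-(n * (x - 0) ^ 2) / 2) := by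
    rw [← exp_add, ← exp_add, ← exp_add]
    ring_nf
  simp only [gaussDensity]
  linear_combination (√(n / (2 * π)) * √(n / (2 * π))) * hexp

variable {ι : Type*} [Fintype ι]

theorem isoGaussDensity_pos (hn : 0 < n) (θ x : ι → ℝ) : 0 < isoGaussDensity n θ x :=
  prod_pos fun _ _ => gaussDensity_pos hn _ _

theorem integrable_isoGaussDensity (hn : 0 < n) (θ : ι → ℝ) :
    Integrable (isoGaussDensity n θ) :=
  Integrable.fintype_prod fun i => integrable_gaussDensity hn (θ i)

theorem integral_isoGaussDensity (hn : 0 < n) (θ : ι → ℝ) :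
    ∫ x, isoGaussDensity n θ x = 1 := by
  unfold isoGaussDensity
  rw [volume_pi, integral_fintype_prod_eq_prod (fun i => gaussDensity n (θ i))]
  exact prod_eq_one fun i _ => integral_gaussDensity hn _

theorem isoGaussDensity_mul_isoGaussDensity (n : ℝ) (θ θ' x : ι → ℝ) :
    isoGaussDensity n θ x * isoGaussDensity n θ' x =
      exp (n * θ ⬝ᵥ θ') * isoGaussDensity n (θ + θ') x * isoGaussDensity n 0 x := by
  simp only [isoGaussDensity, dotProduct, mul_sum, exp_sum, ← prod_mul_distrib,
    gaussDensity_mul_gaussDensity, Pi.add_apply, Pi.zero_apply]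

theorem integral_sq_sum_isoGaussDensity_div {S : Type*} [Fintype S] (hn : 0 < n) (c : ℝ)
    (θ : S → ι → ℝ) :
    ∫ x, (c * ∑ s, isoGaussDensity n (θ s) x) ^ 2 / isoGaussDensity n 0 x =
      c ^ 2 * ∑ s, ∑ s', exp (n * θ s ⬝ᵥ θ s') := by
  have hpoint : ∀ x, (c * ∑ s, isoGaussDensity n (θ s) x) ^ 2 / isoGaussDensity n 0 x =
      c ^ 2 * ∑ s, ∑ s', exp (n * θ s ⬝ᵥ θ s') * isoGaussDensity n (θ s + θ s') x := by
    intro x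
    have h0 := (isoGaussDensity_pos hn 0 x).ne'
    simp only [mul_pow, sq (∑ s, _), sum_mul_sum, mul_div_assoc, sum_div,
      isoGaussDensity_mul_isoGaussDensity, mul_div_cancel_right₀ _ h0]
  have hint : ∀ s s', Integrable fun x ↦ exp (n * θ s ⬝ᵥ θ s') * isoGaussDensity n (θ s + θ s') x :=
    fun s s' => (integrable_isoGaussDensity hn _).const_mul _
  simp only [hpoint, integral_const_mul]
  rw [integral_finsetSum _ fun s _ => integrable_finsetSum _ fun s' _ => hint s s']
  congr 1
  refine sum_congr rfl fun s _ => ?_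
  simp only [integral_finsetSum _ fun s' _ => hint s s', integral_const_mul,
    integral_isoGaussDensity hn, mul_one]

end Gaussian

theorem chi_squared_affinity_bound_general (N k : ℕ) (hkN : k ≤ N)
    (a : ℝ) (n : ℝ) (hn : 0 < n) :
    let φ : (Fin N → ℝ) → (Fin N → ℝ) → ℝ := fun θ x =>
      ∏ i, (Real.sqrt (n / (2 * π)) * Real.exp (-(n * (x i - θ i) ^ 2) / 2))
    let vertex : (Fin k → Bool) → Fin N → ℝ := fun s i =>
      if h : (i : ℕ) < k then (if s ⟨i, h⟩ then a else -a) else 0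
    let p0 : (Fin N → ℝ) → ℝ := φ 0
    let pk : (Fin N → ℝ) → ℝ := fun x => (2 : ℝ)⁻¹ ^ k * ∑ s : Fin k → Bool, φ (vertex s) x
    ∫ x, (pk x) ^ 2 / p0 x ≤ Real.exp (k * a ^ 4 * n ^ 2) := by
  intro φ vertex p0 pk
  let σ : Bool → ℝ := fun b => if b then a else -a
  have hdot (s s' : Fin k → Bool) : vertex s ⬝ᵥ vertex s' = ∑ j, σ (s j) * σ (s' j) :=
    dotProduct_dite_lt hkN (fun j => σ (s j)) fun j => σ (s' j)
  calc ∫ x, pk x ^ 2 / p0 x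
      = ((2 : ℝ)⁻¹ ^ k) ^ 2 * ∑ s, ∑ s', exp (n * vertex s ⬝ᵥ vertex s') :=
        integral_sq_sum_isoGaussDensity_div hn _ vertex
    _ = ((2 : ℝ)⁻¹ ^ k) ^ 2 * (4 * cosh (n * a ^ 2)) ^ k := by
        congr 1
        simp_rw [hdot, mul_sum, exp_sum]
        rw [sum_sum_prod_eq_pow fun b b' => exp (n * (σ b * σ b')), Fintype.card_fin,
          sum_bool_sum_bool_exp_mul_sign]
    _ = cosh (n * a ^ 2) ^ k := by
        rw [← pow_mul, mul_comm k, pow_mul, ← mul_pow]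
        congr 1
        ring
    _ ≤ exp ((n * a ^ 2) ^ 2 / 2) ^ k := by
        gcongr
        exact cosh_le_exp_half_sq _
    _ ≤ exp (k * a ^ 4 * n ^ 2) := by
        rw [← exp_nat_mul, exp_le_exp]
        nlinarith [show (0 : ℝ) ≤ k * a ^ 4 * n ^ 2 by positivity]

/-- Chi-squared affinity bound: with `p₀` the density of `N(0, n⁻¹ I_N)` and `p_k` the
density of the uniform mixture of `N(θ, n⁻¹ I_N)` over the `2^k` vertices `θ ∈ C(a,k)`
(first `k` coordinates `±a`, the rest `0`), one has `∫ p_k² / p₀ ≤ exp(k a⁴ n²)`. -/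
theorem chi_squared_affinity_bound (N k : ℕ) (hk1 : 1 ≤ k) (hkN : k ≤ N)
    (a : ℝ) (ha : 0 < a) (n : ℝ) (hn : 0 < n) :
    let φ : (Fin N → ℝ) → (Fin N → ℝ) → ℝ := fun θ x =>
      ∏ i, (Real.sqrt (n / (2 * π)) * Real.exp (-(n * (x i - θ i) ^ 2) / 2))
    let vertex : (Fin k → Bool) → Fin N → ℝ := fun s i =>
      if h : (i : ℕ) < k then (if s ⟨i, h⟩ then a else -a) else 0
    let p0 : (Fin N → ℝ) → ℝ := φ 0
    let pk : (Fin N → ℝ) → ℝ := fun x => (2 : ℝ)⁻¹ ^ k * ∑ s : Fin k → Bool, φ (vertex s) x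
    ∫ x, (pk x) ^ 2 / p0 x ≤ Real.exp (k * a ^ 4 * n ^ 2) :=
  chi_squared_affinity_bound_general N k hkN a n hn
end

section
/- Fix a > 0, τ > 0, p ≥ 2, L ≥ 1, n ≥ 1. Partition each level j into blocks B_i^j of L consecutive indices and set ξ_{j,i}² = Σ_{(j,k)∈B_i^j} θ_{j,k}². For θ ∈ B^τ_{p,q}(M), let 𝓘 = {(j,i) : ξ_{j,i}² > a L n^{−1}}. Then Card(𝓘) ≤ 3(1 − 2^{−2τ})^{−1/(1+2τ)} a^{−1/(1+2τ)} L^{−1} M^{2/(1+2τ)} n^{1/(1+2τ)}. -/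
/-!
At level `j` the Besov condition bounds `2^{j(τ + 1/2 - 1/p)} ‖θ_j‖_p` by `M`, and Hölder's
inequality on the `2^j` coefficients turns this into the energy bound
`∑_k θ_{j,k}² ≤ M² 2^{-2τj}`. Hence level `j` contains at most `2^j / L` blocks in total and, by
Markov's inequality, at most `M² 2^{-2τj} n / (a L)` high-energy blocks. Counting all blocks
below a cutoff level `j₀` and using the energy bound above it gives at most
`(2^{j₀} + M² n 2^{-2τ j₀} / (a (1 - 2^{-2τ}))) / L`; choosing `2^{j₀}` within a factor two of
the balancing point `x = (M² n / (a (1 - 2^{-2τ})))^{1/(1+2τ)}` gives `3 x / L`.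
-/

open Finset

theorem sum_sq_le_card_rpow_mul_Lp_sq {ι : Type*} (s : Finset ι) (f : ι → ℝ) {p : ℝ}
    (hp : 2 ≤ p) :
    ∑ i ∈ s, f i ^ 2 ≤ (#s : ℝ) ^ (1 - 2 / p) * ((∑ i ∈ s, |f i| ^ p) ^ (1 / p)) ^ 2 := by
  have hp0 : 0 < p := by linarith
  have holder := Real.inner_le_weight_mul_Lp_of_nonneg s (p := p / 2) (by linarith)
    (fun _ => 1) (fun i => f i ^ 2) (fun _ => zero_le_one) (fun i => sq_nonneg (f i))
  have hpow : ∀ i, (f i ^ 2) ^ (p / 2) = |f i| ^ p := fun i => by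
    rw [← sq_abs, ← Real.rpow_natCast, ← Real.rpow_mul (abs_nonneg _)]
    norm_num [mul_div_cancel₀ p two_ne_zero]
  simp only [one_mul, hpow, sum_const, nsmul_eq_mul, mul_one] at holder
  have hS : 0 ≤ ∑ i ∈ s, |f i| ^ p := sum_nonneg fun i _ => by positivity
  convert holder using 2
  · congr 1; field_simp
  · rw [← Real.rpow_natCast, ← Real.rpow_mul hS]; congr 1; field_simp; norm_num

theorem le_of_rpow_sum_rpow_le {ι : Type*} {s : Finset ι} {x : ι → ℝ} {q M : ℝ} (hq : 0 < q)
    (hx : ∀ i ∈ s, 0 ≤ x i) (hM : (∑ i ∈ s, x i ^ q) ^ (1 / q) ≤ M) {i : ι} (hi : i ∈ s) :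
    x i ≤ M :=
  calc x i = (x i ^ q) ^ (1 / q) := by rw [one_div, Real.rpow_rpow_inv (hx i hi) hq.ne']
    _ ≤ (∑ i ∈ s, x i ^ q) ^ (1 / q) :=
        Real.rpow_le_rpow (by have := hx i hi; positivity)
          (single_le_sum (fun j hj => Real.rpow_nonneg (hx j hj) q) hi) (by positivity)
    _ ≤ M := hM

theorem sum_sq_le_of_besov_level_le (f : ℕ → ℝ) {p τ M : ℝ} (j : ℕ) (hp : 2 ≤ p)
    (hf : (2 : ℝ) ^ ((j : ℝ) * (τ + 1 / 2 - 1 / p)) *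
      (∑ k ∈ range (2 ^ j), |f k| ^ p) ^ (1 / p) ≤ M) :
    ∑ k ∈ range (2 ^ j), f k ^ 2 ≤ M ^ 2 * ((2 : ℝ) ^ (-(2 * τ))) ^ j := by
  set N := (∑ k ∈ range (2 ^ j), |f k| ^ p) ^ (1 / p)
  have hN : N ≤ M * (2 : ℝ) ^ (-((j : ℝ) * (τ + 1 / 2 - 1 / p))) := by
    rw [Real.rpow_neg zero_le_two, ← div_eq_mul_inv, le_div_iff₀ (by positivity), mul_comm]
    exact hf
  calc ∑ k ∈ range (2 ^ j), f k ^ 2 ≤ ((2 : ℝ) ^ j) ^ (1 - 2 / p) * N ^ 2 := by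
        simpa only [card_range, Nat.cast_pow, Nat.cast_ofNat] using
          sum_sq_le_card_rpow_mul_Lp_sq (range (2 ^ j)) f hp
    _ ≤ ((2 : ℝ) ^ j) ^ (1 - 2 / p) *
          (M * (2 : ℝ) ^ (-((j : ℝ) * (τ + 1 / 2 - 1 / p)))) ^ 2 := by
        gcongr
    _ = M ^ 2 * ((2 : ℝ) ^ (-(2 * τ))) ^ j := by
        rw [mul_pow, ← Real.rpow_mul_natCast zero_le_two, ← Real.rpow_mul_natCast zero_le_two,
          ← Real.rpow_natCast (2 : ℝ) j, ← Real.rpow_mul zero_le_two, mul_left_comm,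
          ← Real.rpow_add two_pos]
        congr 2
        have : p ≠ 0 := by positivity
        field_simp
        ring

theorem sum_range_sum_Ico_mul {M : Type*} [AddCommMonoid M] (f : ℕ → M) (L m : ℕ) :
    ∑ i ∈ range m, ∑ k ∈ Ico (i * L) ((i + 1) * L), f k = ∑ k ∈ range (m * L), f k := by
  induction m with
  | zero => simp
  | succ m ih =>
    rw [sum_range_succ, ih, range_eq_Ico, range_eq_Ico,
      sum_Ico_consecutive f (Nat.zero_le _) (Nat.mul_le_mul_right L m.le_succ)]

theorem card_filter_lt_le_sum_div {ι : Type*} (s : Finset ι) {g : ι → ℝ} {t : ℝ} (ht : 0 < t)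
    (hg : ∀ i ∈ s, 0 ≤ g i) : (#(s.filter fun i => t < g i) : ℝ) ≤ (∑ i ∈ s, g i) / t := by
  rw [le_div_iff₀ ht, ← nsmul_eq_mul]
  calc #(s.filter fun i => t < g i) • t ≤ ∑ i ∈ s.filter fun i => t < g i, g i :=
        card_nsmul_le_sum _ _ _ fun i hi => (mem_filter.mp hi).2.le
    _ ≤ ∑ i ∈ s, g i :=
        sum_le_sum_of_subset_of_nonneg (filter_subset _ _) fun i hi _ => hg i hi

theorem card_filter_block_energy_le (f : ℕ → ℝ) (L N : ℕ) {t : ℝ} (ht : 0 < t) :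
    (#((range (N / L)).filter fun i => t < ∑ k ∈ Ico (i * L) ((i + 1) * L), f k ^ 2) : ℝ) ≤
      (∑ k ∈ range N, f k ^ 2) / t := by
  refine (card_filter_lt_le_sum_div _ ht fun i _ => sum_nonneg fun k _ => sq_nonneg _).trans ?_
  gcongr
  rw [sum_range_sum_Ico_mul]
  exact sum_le_sum_of_subset_of_nonneg (range_subset_range.mpr (Nat.div_mul_le_self N L))
    fun k _ _ => sq_nonneg _

theorem card_filter_range_div_le {p : ℕ → Prop} [DecidablePred p] (N L : ℕ) :
    (#((range (N / L)).filter p) : ℝ) ≤ N / L :=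
  calc (#((range (N / L)).filter p) : ℝ) ≤ (N / L : ℕ) := by
        exact_mod_cast (card_filter_le _ _).trans (card_range _).le
    _ ≤ N / L := Nat.cast_div_le

theorem exists_two_pow_mem_Icc {x : ℝ} (hx : 0 ≤ x) :
    ∃ j : ℕ, (2 : ℝ) ^ j ∈ Set.Icc x (2 * x + 1) := by
  rcases lt_or_ge x 1 with hx1 | hx1
  · exact ⟨0, by norm_num [hx1.le, hx]⟩
  · obtain ⟨j, hj, hj'⟩ := exists_nat_pow_near hx1 one_lt_two
    exact ⟨j + 1, hj'.le, by rw [pow_succ]; linarith⟩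

theorem sum_le_of_le_two_pow_of_le_geom {c : ℕ → ℝ} {A B r : ℝ} {J : ℕ} (hA : 0 ≤ A)
    (hB : 0 ≤ B) (hr0 : 0 ≤ r) (hr1 : r < 1) (h2 : ∀ j ∈ range J, c j ≤ A * 2 ^ j)
    (hg : ∀ j ∈ range J, c j ≤ B * r ^ j) (j₀ : ℕ) :
    ∑ j ∈ range J, c j ≤ A * (2 ^ j₀ - 1) + B * (r ^ j₀ / (1 - r)) := by
  rw [← sum_filter_add_sum_filter_not (range J) (· < j₀)]
  gcongr
  · calc ∑ j ∈ (range J).filter (· < j₀), c j ≤ ∑ j ∈ range j₀, A * 2 ^ j := by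
          refine (sum_le_sum fun j hj => h2 j (mem_filter.mp hj).1).trans ?_
          exact sum_le_sum_of_subset_of_nonneg (fun j hj => mem_range.mpr (mem_filter.mp hj).2)
            fun j _ _ => by positivity
      _ = A * (2 ^ j₀ - 1) := by rw [← mul_sum, geom_sum_eq (by norm_num)]; norm_num
  · calc ∑ j ∈ (range J).filter (¬ · < j₀), c j ≤ ∑ j ∈ Ico j₀ J, B * r ^ j := by
          refine (sum_le_sum fun j hj => hg j (mem_filter.mp hj).1).trans ?_
          refine sum_le_sum_of_subset_of_nonneg (fun j hj => ?_) fun j _ _ => by positivity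
          simp only [mem_filter, mem_range, not_lt] at hj
          exact mem_Ico.mpr ⟨hj.2, hj.1⟩
      _ ≤ B * (r ^ j₀ / (1 - r)) := by
          rw [← mul_sum]; gcongr; exact geom_sum_Ico_le_of_lt_one hr0 hr1

theorem sum_le_three_mul_rpow_of_le_two_pow_of_le_geom {c : ℕ → ℝ} {A K τ : ℝ} {J : ℕ}
    (hA : 0 ≤ A) (hK : 0 < K) (hτ : 0 < τ) (h2 : ∀ j ∈ range J, c j ≤ A * 2 ^ j)
    (hg : ∀ j ∈ range J, c j ≤ A * K * ((2 : ℝ) ^ (-(2 * τ))) ^ j) :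
    ∑ j ∈ range J, c j ≤ 3 * A * (K / (1 - (2 : ℝ) ^ (-(2 * τ)))) ^ (1 / (1 + 2 * τ)) := by
  set r : ℝ := (2 : ℝ) ^ (-(2 * τ))
  have hr1 : r < 1 := Real.rpow_lt_one_of_one_lt_of_neg one_lt_two (by linarith)
  have hD : 0 < 1 - r := by linarith
  set x := (K / (1 - r)) ^ (1 / (1 + 2 * τ))
  have hx : 0 < x := by positivity
  have hbalance : K * (x ^ (-(2 * τ)) / (1 - r)) = x := by
    have hx_pow : x ^ (1 + 2 * τ) = K / (1 - r) := by
      simpa only [x, one_div] using Real.rpow_inv_rpow (by positivity) (by linarith)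
    calc K * (x ^ (-(2 * τ)) / (1 - r)) = x ^ (1 + 2 * τ) * x ^ (-(2 * τ)) := by
          rw [hx_pow]; ring
      _ = x := by rw [← Real.rpow_add hx]; norm_num
  obtain ⟨j₀, hxj, hjx⟩ := exists_two_pow_mem_Icc hx.le
  have hrj : r ^ j₀ ≤ x ^ (-(2 * τ)) := by
    rw [← Real.rpow_mul_natCast zero_le_two, mul_comm, Real.rpow_natCast_mul zero_le_two]
    exact Real.rpow_le_rpow_of_nonpos hx hxj (by linarith)
  calc ∑ j ∈ range J, c j ≤ A * (2 ^ j₀ - 1) + A * K * (r ^ j₀ / (1 - r)) :=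
        sum_le_of_le_two_pow_of_le_geom hA (by positivity) (by positivity) hr1 h2 hg j₀
    _ ≤ A * (2 * x) + A * (K * (x ^ (-(2 * τ)) / (1 - r))) := by
        rw [mul_assoc A K]; gcongr; linarith
    _ = 3 * A * x := by rw [hbalance]; ring

theorem besov_block_count_general (J : ℕ) (θ : ℕ → ℕ → ℝ) (p q τ M a : ℝ) (L n : ℕ)
    (hp : 2 ≤ p) (hq : 1 ≤ q) (hτ : 0 < τ) (hM : 0 < M) (ha : 0 < a)
    (hL : 1 ≤ L) (hn : 1 ≤ n)
    (hθ : (∑ j ∈ range J,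
        ((2 : ℝ) ^ ((j : ℝ) * (τ + 1 / 2 - 1 / p)) *
          (∑ k ∈ range (2 ^ j), |θ j k| ^ p) ^ (1 / p)) ^ q) ^ (1 / q) ≤ M) :
    let ξsq : ℕ → ℕ → ℝ := fun j i => ∑ k ∈ Finset.Ico (i * L) ((i + 1) * L), (θ j k) ^ 2
    let I : Finset (Σ _ : ℕ, ℕ) :=
      ((range J).sigma fun j => range (2 ^ j / L)).filter fun x => a * L / n < ξsq x.1 x.2
    (I.card : ℝ) ≤ 3 * (1 - (2 : ℝ) ^ (-(2 * τ))) ^ (-(1 / (1 + 2 * τ))) *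
        a ^ (-(1 / (1 + 2 * τ))) * (L : ℝ)⁻¹ *
        M ^ (2 / (1 + 2 * τ)) * (n : ℝ) ^ (1 / (1 + 2 * τ)) := by
  intro ξsq I
  set r : ℝ := (2 : ℝ) ^ (-(2 * τ))
  have hL0 : (0 : ℝ) < L := by exact_mod_cast hL
  have hn0 : (0 : ℝ) < n := by exact_mod_cast hn
  have ht : 0 < a * L / n := by positivity
  have hD : 0 < 1 - r := by
    linarith [Real.rpow_lt_one_of_one_lt_of_neg one_lt_two (by linarith : -(2 * τ) < 0)]
  have hlevel (j : ℕ) (hj : j ∈ range J) : ∑ k ∈ range (2 ^ j), θ j k ^ 2 ≤ M ^ 2 * r ^ j :=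
    sum_sq_le_of_besov_level_le (θ j) j hp
      (le_of_rpow_sum_rpow_le (by linarith) (fun i _ => by positivity) hθ hj)
  have hI : (#I : ℝ) =
      ∑ j ∈ range J, (#((range (2 ^ j / L)).filter fun i => a * L / n < ξsq j i) : ℝ) := by
    rw [show I = _ from filter_sigma' _ _ fun j i => a * L / n < ξsq j i, card_sigma,
      Nat.cast_sum]
  calc (#I : ℝ) ≤ 3 * (L : ℝ)⁻¹ * (M ^ 2 * n / a / (1 - r)) ^ (1 / (1 + 2 * τ)) := by
        rw [hI]
        refine sum_le_three_mul_rpow_of_le_two_pow_of_le_geom (by positivity) (by positivity)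
          hτ (fun j _ => ?_) fun j hj => ?_
        · simpa [div_eq_inv_mul] using card_filter_range_div_le (2 ^ j) L
        · calc _ ≤ (∑ k ∈ range (2 ^ j), θ j k ^ 2) / (a * L / n) :=
                card_filter_block_energy_le (θ j) L _ ht
            _ ≤ M ^ 2 * r ^ j / (a * L / n) := by gcongr; exact hlevel j hj
            _ = (L : ℝ)⁻¹ * (M ^ 2 * n / a) * r ^ j := by field_simp
    _ = _ := by
        rw [Real.div_rpow (by positivity) hD.le, Real.div_rpow (by positivity) ha.le,
          Real.mul_rpow (by positivity) hn0.le, ← Real.rpow_natCast M 2, ← Real.rpow_mul hM.le,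
          Nat.cast_ofNat, Real.rpow_neg hD.le, Real.rpow_neg ha.le]
        field_simp

/-- Counting bound for the number of high-energy blocks on a Besov body: blocks of `L`
consecutive coefficients whose energy exceeds `a L / n` number at most
`3 (1 - 2^{-2τ})^{-1/(1+2τ)} a^{-1/(1+2τ)} L⁻¹ M^{2/(1+2τ)} n^{1/(1+2τ)}`. -/
theorem besov_block_count (J : ℕ) (θ : ℕ → ℕ → ℝ) (p q τ M a : ℝ) (L n : ℕ)
    (hp : 2 ≤ p) (hq : 1 ≤ q) (hτ : 0 < τ) (hM : 0 < M) (ha : 0 < a)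
    (hL : 1 ≤ L) (hn : 1 ≤ n)
    (hs : 0 < τ + 1 / 2 - 1 / p)
    (hθ : (∑ j ∈ range J,
        ((2 : ℝ) ^ ((j : ℝ) * (τ + 1 / 2 - 1 / p)) *
          (∑ k ∈ range (2 ^ j), |θ j k| ^ p) ^ (1 / p)) ^ q) ^ (1 / q) ≤ M) :
    let ξsq : ℕ → ℕ → ℝ := fun j i => ∑ k ∈ Finset.Ico (i * L) ((i + 1) * L), (θ j k) ^ 2
    let I : Finset (Σ _ : ℕ, ℕ) :=
      ((range J).sigma fun j => range (2 ^ j / L)).filter fun x => a * L / n < ξsq x.1 x.2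
    (I.card : ℝ) ≤ 3 * (1 - (2 : ℝ) ^ (-(2 * τ))) ^ (-(1 / (1 + 2 * τ))) *
        a ^ (-(1 / (1 + 2 * τ))) * (L : ℝ)⁻¹ *
        M ^ (2 / (1 + 2 * τ)) * (n : ℝ) ^ (1 / (1 + 2 * τ)) :=
  besov_block_count_general J θ p q τ M a L n hp hq hτ hM ha hL hn hθ
end

section
/- Let y_i = θ_i + σ z_i for i = 1,...,L with z_i i.i.d. N(0,1). Let λ* be the root of λ − log λ = 5 and, for τ > 0, let λ_τ > 1 be the root of λ − log λ = 1 + 4τ/(1+2τ). If Σ_{i=1}^L θ_i² ≤ (√λ* − √λ_τ)² L σ², then P(Σ_{i=1}^L y_i² ≥ λ* L σ²) ≤ P(Σ_{i=1}^L z_i² ≥ λ_τ L) ≤ (1/2) exp(−(2τ/(1+2τ)) L). -/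
/-!
The first inequality is the triangle inequality in `ℓ²`: `‖θ‖ ≤ (√λ* - √λ_τ) √L σ`, so
`‖θ + σ z‖ ≥ √λ* √L σ` forces `σ ‖z‖ ≥ √λ_τ √L σ`. This needs `λ_τ ≤ λ*`, which holds because
`x - log x` is increasing on `[1, ∞)` and `1 + 4τ/(1+2τ) < 5`.

For the chi-squared tail, polar coordinates turn `P(‖z‖² ≥ a²)` into `∫_a^∞ g / ∫_0^∞ g` with
`g r = r^(L-1) exp(-r²/2)`. The substitution `r = √λ s` gives
`∫_{√(λL)}^∞ g ≤ λ^(L/2) exp(-(λ-1)L/2) ∫_{√L}^∞ g`, and the inversion `r ↦ L/r`, which maps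
`(0, √L)` onto `(√L, ∞)` and satisfies `(L/r²) g(L/r) ≤ g r` there, gives
`∫_{√L}^∞ g ≤ (∫_0^∞ g) / 2`. Finally `λ^(L/2) exp(-(λ-1)L/2) = exp(-(L/2)(λ - log λ - 1))`, and
`λ_τ - log λ_τ - 1 = 4τ/(1+2τ)`.
-/

open MeasureTheory ProbabilityTheory Real Set

lemma sub_log_le_sub_log {a b : ℝ} (ha : 1 ≤ a) (hab : a ≤ b) : a - log a ≤ b - log b := by
  have ha0 : 0 < a := by linarith
  have hlog : log b - log a ≤ b / a - 1 := by
    rw [← log_div (by linarith) ha0.ne']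
    exact log_le_sub_one_of_pos (div_pos (by linarith) ha0)
  have : b / a - 1 ≤ b - a := by
    rw [div_sub_one ha0.ne', div_le_iff₀ ha0]
    nlinarith
  linarith

lemma sq_le_sum_sq_of_sum_sq_le {ι : Type*} [Fintype ι] {x y : ι → ℝ} {s t : ℝ}
    (hs : 0 ≤ s) (ht : 0 ≤ t) (hx : ∑ i, x i ^ 2 ≤ s ^ 2)
    (hxy : (s + t) ^ 2 ≤ ∑ i, (x i + y i) ^ 2) :
    t ^ 2 ≤ ∑ i, y i ^ 2 := by
  set X : EuclideanSpace ℝ ι := WithLp.toLp 2 x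
  set Y : EuclideanSpace ℝ ι := WithLp.toLp 2 y
  have hX : ‖X‖ ≤ s := by
    rwa [← pow_le_pow_iff_left₀ (norm_nonneg X) hs two_ne_zero, EuclideanSpace.real_norm_sq_eq]
  have hXY : s + t ≤ ‖X + Y‖ := by
    rwa [← pow_le_pow_iff_left₀ (by positivity) (norm_nonneg _) two_ne_zero,
      EuclideanSpace.real_norm_sq_eq]
  have hY : t ≤ ‖Y‖ := by linarith [norm_add_le X Y]
  rw [← EuclideanSpace.real_norm_sq_eq Y]
  exact pow_le_pow_left₀ ht hY 2

lemma le_sum_sq_of_le_sum_sq_add {ι : Type*} [Fintype ι] {θ w : ι → ℝ} {σ c s t : ℝ}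
    (hσ : 0 < σ) (hc : 0 ≤ c) (ht : 0 ≤ t) (hts : t ≤ s)
    (hθ : ∑ i, θ i ^ 2 ≤ (√s - √t) ^ 2 * c * σ ^ 2)
    (hy : s * c * σ ^ 2 ≤ ∑ i, (θ i + σ * w i) ^ 2) :
    t * c ≤ ∑ i, w i ^ 2 := by
  have hst : 0 ≤ √s - √t := sub_nonneg.2 (sqrt_le_sqrt hts)
  have key := sq_le_sum_sq_of_sum_sq_le (y := fun i => σ * w i)
    (s := (√s - √t) * √c * σ) (t := √t * √c * σ) (by positivity) (by positivity)
    (by rwa [mul_pow, mul_pow, sq_sqrt hc])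
    (by rwa [← add_mul, ← add_mul, sub_add_cancel, mul_pow, mul_pow, sq_sqrt (ht.trans hts),
      sq_sqrt hc])
  simp only [mul_pow, sq_sqrt ht, sq_sqrt hc, ← Finset.mul_sum] at key
  rw [mul_comm (σ ^ 2)] at key
  exact le_of_mul_le_mul_right key (by positivity)

lemma integrableOn_pow_mul_exp_neg_sq_div_two (n : ℕ) :
    IntegrableOn (fun r : ℝ => r ^ n * exp (-r ^ 2 / 2)) (Ioi 0) := by
  have h := integrableOn_rpow_mul_exp_neg_mul_sq (b := 1 / 2) (by norm_num)
    (s := n) (by linarith [(n.cast_nonneg : (0 : ℝ) ≤ n)])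
  simp only [rpow_natCast] at h
  convert h using 4
  ring

lemma integral_pow_mul_exp_neg_sq_div_two_pos (n : ℕ) :
    0 < ∫ r in Ioi 0, r ^ n * exp (-r ^ 2 / 2) := by
  have h := integral_rpow_mul_exp_neg_mul_rpow (p := 2) (q := n) (b := 1 / 2) two_pos
    (by linarith [(n.cast_nonneg : (0 : ℝ) ≤ n)]) (by norm_num)
  simp only [rpow_natCast, rpow_two] at h
  have heq (r : ℝ) : r ^ n * exp (-r ^ 2 / 2) = r ^ n * exp (-(1 / 2) * r ^ 2) := by ring_nf
  simp_rw [heq, h]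
  positivity

lemma pow_mul_exp_neg_sq_le {n : ℕ} {u y : ℝ} (hu : 1 ≤ u) (h : u * y ^ 2 = n + 1) :
    u ^ (n + 1) * exp (-(u * y) ^ 2 / 2) ≤ exp (-y ^ 2 / 2) := by
  have hu0 : 0 < u := by linarith
  have hlog : log u ≤ (u - u⁻¹) / 2 := by
    rw [← sinh_log hu0]
    exact self_le_sinh_iff.2 (log_nonneg hu)
  rw [← exp_log (pow_pos hu0 _), ← exp_add, exp_le_exp, log_pow]
  push_cast
  rw [← h]
  have := mul_le_mul_of_nonneg_left hlog (by positivity : 0 ≤ u * y ^ 2)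
  have e : u * y ^ 2 * ((u - u⁻¹) / 2) = (u ^ 2 * y ^ 2 - y ^ 2) / 2 := by
    field_simp
  linarith

lemma integral_Ioi_mul_pow_mul_exp_le (n : ℕ) {c b : ℝ} (hc : 1 ≤ c) (hb : 0 ≤ b) :
    ∫ r in Ioi (c * b), r ^ n * exp (-r ^ 2 / 2) ≤
      c ^ (n + 1) * exp (-(c ^ 2 - 1) * b ^ 2 / 2) * ∫ r in Ioi b, r ^ n * exp (-r ^ 2 / 2) := by
  have hc0 : 0 < c := by linarith
  have hsub := integral_comp_mul_left_Ioi (fun r : ℝ => r ^ n * exp (-r ^ 2 / 2)) b hc0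
  rw [smul_eq_mul, eq_inv_mul_iff_mul_eq₀ hc0.ne'] at hsub
  rw [← hsub, ← integral_const_mul, ← integral_const_mul]
  have hpos : ∀ r ∈ Ioi b, 0 < r := fun r hr => hb.trans_lt hr
  refine integral_mono_of_nonneg
    (ae_restrict_of_forall_mem measurableSet_Ioi fun r hr => by have := hpos r hr; positivity)
    (((integrableOn_pow_mul_exp_neg_sq_div_two n).mono_set (Ioi_subset_Ioi hb)).const_mul _)
    (ae_restrict_of_forall_mem measurableSet_Ioi fun r hr => ?_)
  have hr0 := hpos r hr
  have hexp : exp (-(c * r) ^ 2 / 2) ≤ exp (-(c ^ 2 - 1) * b ^ 2 / 2) * exp (-r ^ 2 / 2) := by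
    rw [← exp_add, exp_le_exp]
    have : b ^ 2 ≤ r ^ 2 := pow_le_pow_left₀ hb (le_of_lt hr) 2
    nlinarith [mul_le_mul_of_nonneg_left this (by nlinarith : 0 ≤ c ^ 2 - 1)]
  calc c * ((c * r) ^ n * exp (-(c * r) ^ 2 / 2))
      = c ^ (n + 1) * r ^ n * exp (-(c * r) ^ 2 / 2) := by ring
    _ ≤ c ^ (n + 1) * r ^ n * (exp (-(c ^ 2 - 1) * b ^ 2 / 2) * exp (-r ^ 2 / 2)) := by gcongr
    _ = _ := by ring

lemma integral_Ioi_pow_mul_exp_le_integral_Ioo {n : ℕ} {b : ℝ} (hb : 0 < b) (hb2 : b ^ 2 = n + 1) :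
    ∫ r in Ioi b, r ^ n * exp (-r ^ 2 / 2) ≤ ∫ r in Ioo 0 b, r ^ n * exp (-r ^ 2 / 2) := by
  have himage : (fun y => b ^ 2 / y) '' Ioo 0 b = Ioi b := by
    ext r
    simp only [mem_image, mem_Ioo, mem_Ioi]
    constructor
    · rintro ⟨y, ⟨hy0, hyb⟩, rfl⟩
      rw [lt_div_iff₀ hy0]
      nlinarith
    · intro hr
      have hr0 : 0 < r := hb.trans hr
      refine ⟨b ^ 2 / r, ⟨by positivity, ?_⟩, by field_simp⟩
      rw [div_lt_iff₀ hr0]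
      nlinarith
  have hderiv : ∀ y ∈ Ioo 0 b,
      HasDerivWithinAt (fun y => b ^ 2 / y) (-(b ^ 2) / y ^ 2) (Ioo 0 b) y := fun y hy => by
    simpa [div_eq_mul_inv, neg_div] using
      ((hasDerivAt_inv hy.1.ne').const_mul (b ^ 2)).hasDerivWithinAt
  have hinj : InjOn (fun y => b ^ 2 / y) (Ioo 0 b) := fun y₁ _ y₂ _ h =>
    inv_injective (mul_left_cancel₀ (pow_ne_zero 2 hb.ne') h)
  rw [← himage, integral_image_eq_integral_abs_deriv_smul measurableSet_Ioo hderiv hinj]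
  refine integral_mono_of_nonneg
    (ae_restrict_of_forall_mem measurableSet_Ioo fun y hy => by have := hy.1; positivity)
    ((integrableOn_pow_mul_exp_neg_sq_div_two n).mono_set Ioo_subset_Ioi_self)
    (ae_restrict_of_forall_mem measurableSet_Ioo fun y hy => ?_)
  obtain ⟨hy0, hyb⟩ := hy
  set u := b ^ 2 / y ^ 2 with hu
  have hu1 : 1 ≤ u := by rw [hu, le_div_iff₀ (by positivity)]; nlinarith
  have huy : u * y ^ 2 = n + 1 := by rw [hu, ← hb2]; field_simp
  have hby : b ^ 2 / y = u * y := by rw [hu]; field_simp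
  calc |-(b ^ 2) / y ^ 2| • ((b ^ 2 / y) ^ n * exp (-(b ^ 2 / y) ^ 2 / 2))
      = y ^ n * (u ^ (n + 1) * exp (-(u * y) ^ 2 / 2)) := by
        rw [smul_eq_mul, neg_div, abs_neg, abs_of_nonneg (by positivity), hby]
        ring
    _ ≤ y ^ n * exp (-y ^ 2 / 2) := by gcongr; exact pow_mul_exp_neg_sq_le hu1 huy

lemma integral_Ioi_sqrt_pow_mul_exp_le_half (n : ℕ) :
    ∫ r in Ioi √(n + 1), r ^ n * exp (-r ^ 2 / 2) ≤
      (∫ r in Ioi 0, r ^ n * exp (-r ^ 2 / 2)) / 2 := by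
  have hb : 0 < √(n + 1 : ℝ) := by positivity
  have hint := integrableOn_pow_mul_exp_neg_sq_div_two n
  rw [← Ioc_union_Ioi_eq_Ioi hb.le, setIntegral_union Ioc_disjoint_Ioi_same measurableSet_Ioi
    (hint.mono_set Ioc_subset_Ioi_self) (hint.mono_set (Ioi_subset_Ioi hb.le)),
    integral_Ioc_eq_integral_Ioo]
  linarith [integral_Ioi_pow_mul_exp_le_integral_Ioo hb (sq_sqrt (by positivity))]

lemma pi_withDensity_ofReal {ι α : Type*} [Fintype ι] [MeasurableSpace α] {μ : Measure α}
    [SigmaFinite μ] {f : α → ℝ} (hf : Integrable f μ) (hf0 : ∀ x, 0 ≤ f x) :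
    Measure.pi (fun _ : ι => μ.withDensity fun x => ENNReal.ofReal (f x)) =
      (Measure.pi fun _ : ι => μ).withDensity fun x => ENNReal.ofReal (∏ i, f (x i)) := by
  have := isFiniteMeasure_withDensity_ofReal hf.2
  refine Measure.pi_eq fun s hs => ?_
  rw [withDensity_apply _ (.univ_pi hs), Measure.restrict_pi_pi,
    ← ofReal_integral_eq_lintegral_ofReal (.fintype_prod fun _ => hf.restrict)
      (ae_of_all _ fun x => Finset.prod_nonneg fun i _ => hf0 (x i)),
    integral_fintype_prod_eq_prod (𝕜 := ℝ),
    ENNReal.ofReal_prod_of_nonneg fun i _ => integral_nonneg hf0]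
  refine Finset.prod_congr rfl fun i _ => ?_
  rw [withDensity_apply _ (hs i), ofReal_integral_eq_lintegral_ofReal hf.restrict (ae_of_all _ hf0)]

lemma gaussianPDFReal_zero_one (x : ℝ) :
    gaussianPDFReal 0 1 x = (√(2 * π))⁻¹ * exp (-x ^ 2 / 2) := by
  simp [gaussianPDFReal]

lemma exists_integral_pi_gaussianReal_fun_sqrt (n : ℕ) :
    ∃ C : ℝ, ∀ f : ℝ → ℝ,
      ∫ x, f √(∑ i, x i ^ 2) ∂(Measure.pi fun _ : Fin (n + 1) => gaussianReal 0 1) =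
        C * ∫ r in Ioi 0, r ^ n * exp (-r ^ 2 / 2) * f r := by
  set c := (√(2 * π))⁻¹ ^ (n + 1)
  refine ⟨(n + 1) * volume.real (Metric.ball (0 : EuclideanSpace ℝ (Fin (n + 1))) 1) * c,
    fun f => ?_⟩
  have hdens : ∀ x : Fin (n + 1) → ℝ,
      ∏ i, gaussianPDFReal 0 1 (x i) = c * exp (-‖WithLp.toLp 2 x‖ ^ 2 / 2) := by
    intro x
    simp_rw [gaussianPDFReal_zero_one, Finset.prod_mul_distrib, EuclideanSpace.real_norm_sq_eq]
    rw [Finset.prod_const, Finset.card_univ, Fintype.card_fin, ← exp_sum]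
    simp only [neg_div, Finset.sum_neg_distrib, Finset.sum_div]
    rfl
  rw [gaussianReal_of_var_ne_zero 0 one_ne_zero, gaussianPDF_def,
    pi_withDensity_ofReal (integrable_gaussianPDFReal 0 1) (gaussianPDFReal_nonneg 0 1),
    integral_withDensity_eq_integral_toReal_smul (by fun_prop)
      (ae_of_all _ fun _ => ENNReal.ofReal_lt_top)]
  have hnorm : ∀ x : Fin (n + 1) → ℝ, √(∑ i, x i ^ 2) = ‖WithLp.toLp 2 x‖ := fun x => by
    rw [← EuclideanSpace.real_norm_sq_eq, sqrt_sq (norm_nonneg _)]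
  simp_rw [ENNReal.toReal_ofReal (Finset.prod_nonneg fun i _ => gaussianPDFReal_nonneg 0 1 _),
    hdens, hnorm, smul_eq_mul]
  rw [← volume_pi, (PiLp.volume_preserving_toLp _).integral_comp
    (MeasurableEquiv.toLp 2 _).measurableEmbedding
    (fun y : EuclideanSpace ℝ (Fin (n + 1)) => c * exp (-‖y‖ ^ 2 / 2) * f ‖y‖),
    integral_fun_norm_addHaar volume fun r => c * exp (-r ^ 2 / 2) * f r,
    finrank_euclideanSpace_fin]
  simp only [Nat.add_sub_cancel, nsmul_eq_mul, smul_eq_mul, Nat.cast_add, Nat.cast_one]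
  rw [← integral_const_mul, ← integral_const_mul, ← integral_const_mul]
  congr 1 with r
  ring

lemma pi_gaussianReal_real_sq_le_sum_sq_mul_integral (n : ℕ) {a : ℝ} (ha : 0 ≤ a) :
    (Measure.pi fun _ : Fin (n + 1) => gaussianReal 0 1).real {x | a ^ 2 ≤ ∑ i, x i ^ 2} *
        ∫ r in Ioi 0, r ^ n * exp (-r ^ 2 / 2) =
      ∫ r in Ioi a, r ^ n * exp (-r ^ 2 / 2) := by
  obtain ⟨C, hC⟩ := exists_integral_pi_gaussianReal_fun_sqrt n
  have hmass := hC 1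
  have htail := hC ((Ici a).indicator 1)
  simp only [Pi.one_apply, integral_const, probReal_univ, smul_eq_mul, mul_one] at hmass
  have hset : (fun x : Fin (n + 1) → ℝ => √(∑ i, x i ^ 2)) ⁻¹' Ici a =
      {x | a ^ 2 ≤ ∑ i, x i ^ 2} := by
    ext x
    exact le_sqrt ha (Finset.sum_nonneg fun i _ => sq_nonneg _)
  have hmeas : MeasurableSet {x : Fin (n + 1) → ℝ | a ^ 2 ≤ ∑ i, x i ^ 2} :=
    measurableSet_le measurable_const (by fun_prop)
  have hae : (Ioi 0 ∩ Ici a : Set ℝ) =ᵐ[volume] Ioi a := by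
    rw [← max_eq_right ha, ← Ioi_inter_Ioi, max_eq_right ha]
    exact (ae_eq_refl _).inter Ioi_ae_eq_Ici.symm
  have hprob : ∫ x, (Ici a).indicator 1 √(∑ i, x i ^ 2)
      ∂(Measure.pi fun _ : Fin (n + 1) => gaussianReal 0 1) =
      (Measure.pi fun _ : Fin (n + 1) => gaussianReal 0 1).real {x | a ^ 2 ≤ ∑ i, x i ^ 2} := by
    rw [← integral_indicator_one hmeas, ← hset]
    rfl
  have hradial : ∫ r in Ioi 0, r ^ n * exp (-r ^ 2 / 2) * (Ici a).indicator 1 r =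
      ∫ r in Ioi a, r ^ n * exp (-r ^ 2 / 2) := by
    rw [← setIntegral_congr_set hae, ← setIntegral_indicator measurableSet_Ici]
    congr 1 with r
    by_cases hr : r ∈ Ici a <;> simp [hr]
  rw [hprob, hradial] at htail
  rw [htail, mul_right_comm, ← hmass, one_mul]

lemma pi_gaussianReal_real_le_sum_sq_le {n : ℕ} (hn : n ≠ 0) {lam : ℝ} (hlam : 1 ≤ lam) :
    (Measure.pi fun _ : Fin n => gaussianReal 0 1).real {x | lam * n ≤ ∑ i, x i ^ 2} ≤
      1 / 2 * exp (-(n / 2) * (lam - log lam - 1)) := by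
  obtain ⟨m, rfl⟩ := Nat.exists_eq_succ_of_ne_zero hn
  have hlam0 : 0 < lam := by linarith
  have hm : (0 : ℝ) < m + 1 := by positivity
  have htail :=
    pi_gaussianReal_real_sq_le_sum_sq_mul_integral m (a := √lam * √(m + 1)) (by positivity)
  rw [mul_pow, sq_sqrt hlam0.le, sq_sqrt hm.le] at htail
  have hscale := integral_Ioi_mul_pow_mul_exp_le m (one_le_sqrt.2 hlam) (sqrt_nonneg (m + 1 : ℝ))
  rw [sq_sqrt hlam0.le, sq_sqrt hm.le] at hscale
  have hconst : √lam ^ (m + 1) * exp (-(lam - 1) * (m + 1) / 2) =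
      exp (-((m + 1 : ℝ) / 2) * (lam - log lam - 1)) := by
    rw [← exp_log (pow_pos (sqrt_pos.2 hlam0) _), ← exp_add, log_pow, log_sqrt hlam0.le]
    push_cast
    ring_nf
  have hI := integral_pow_mul_exp_neg_sq_div_two_pos m
  refine le_of_mul_le_mul_right ?_ hI
  push_cast at htail ⊢
  rw [htail, ← hconst]
  calc _ ≤ _ := hscale
    _ ≤ √lam ^ (m + 1) * exp (-(lam - 1) * (m + 1) / 2) *
          ((∫ r in Ioi 0, r ^ m * exp (-r ^ 2 / 2)) / 2) := by
        gcongr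
        exact integral_Ioi_sqrt_pow_mul_exp_le_half m
    _ = _ := by ring

/-- Lemma 4(i): if the block signal energy is small, `Σ θ_i² ≤ (√λ* - √λ_τ)² L σ²`, then
`P(Σ y_i² ≥ λ* L σ²) ≤ P(Σ z_i² ≥ λ_τ L) ≤ (1/2) exp(-(2τ/(1+2τ)) L)`, where
`λ* - log λ* = 5` and `λ_τ - log λ_τ = 1 + 4τ/(1+2τ)`. -/
theorem block_tail_small_signal
    {Ω : Type*} [MeasurableSpace Ω] (μ : Measure Ω) [IsProbabilityMeasure μ]
    (L : ℕ) (hL : 1 ≤ L) (z : Fin L → Ω → ℝ)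
    (hmeas : ∀ i, Measurable (z i))
    (hindep : iIndepFun z μ)
    (hgauss : ∀ i, Measure.map (z i) μ = gaussianReal 0 1)
    (σ : ℝ) (hσ : 0 < σ) (θ : Fin L → ℝ) (τ : ℝ) (hτ : 0 < τ)
    (lamS lamT : ℝ) (hlamS1 : 1 < lamS) (hlamS : lamS - Real.log lamS = 5)
    (hlamT1 : 1 < lamT) (hlamT : lamT - Real.log lamT = 1 + 4 * τ / (1 + 2 * τ))
    (hθ : ∑ i, (θ i) ^ 2 ≤ (Real.sqrt lamS - Real.sqrt lamT) ^ 2 * L * σ ^ 2) :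
    μ {ω | lamS * L * σ ^ 2 ≤ ∑ i, (θ i + σ * z i ω) ^ 2} ≤
        μ {ω | lamT * L ≤ ∑ i, (z i ω) ^ 2} ∧
      (μ {ω | lamT * L ≤ ∑ i, (z i ω) ^ 2}).toReal ≤
        (1 / 2) * Real.exp (-(2 * τ / (1 + 2 * τ)) * L) := by
  have hTS : lamT ≤ lamS := by
    by_contra! h
    have : 4 * τ / (1 + 2 * τ) < 2 := by rw [div_lt_iff₀ (by positivity)]; linarith
    linarith [sub_log_le_sub_log hlamS1.le h.le]
  refine ⟨measure_mono fun ω hω =>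
    le_sum_sq_of_le_sum_sq_add hσ L.cast_nonneg (by linarith) hTS hθ hω, ?_⟩
  have hlaw : μ.map (fun ω i => z i ω) = Measure.pi fun _ => gaussianReal 0 1 := by
    rw [(iIndepFun_iff_map_fun_eq_pi_map fun i => (hmeas i).aemeasurable).1 hindep]
    simp only [hgauss]
  have hset : MeasurableSet {x : Fin L → ℝ | lamT * L ≤ ∑ i, x i ^ 2} :=
    measurableSet_le measurable_const (by fun_prop)
  calc (μ {ω | lamT * L ≤ ∑ i, z i ω ^ 2}).toReal
      = (Measure.pi fun _ : Fin L => gaussianReal 0 1).real {x | lamT * L ≤ ∑ i, x i ^ 2} := by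
        rw [← hlaw, measureReal_def, Measure.map_apply (by fun_prop) hset]
        rfl
    _ ≤ 1 / 2 * exp (-(L / 2) * (lamT - log lamT - 1)) :=
        pi_gaussianReal_real_le_sum_sq_le (by omega) hlamT1.le
    _ = 1 / 2 * exp (-(2 * τ / (1 + 2 * τ)) * L) := by
        rw [show lamT - log lamT - 1 = 4 * τ / (1 + 2 * τ) by linarith]
        ring_nf
end
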